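/- Let w_j, w_k, w_l, w_m, m_α, m_β be nonzero complex numbers and set A' = (m_β·w_m)/w_j, B' = (m_α·w_k)/w_j, F' = (m_α·w_l)/w_m, C = (w_j·w_l)/(w_m·w_k). Assume ‖A'‖ < 1, ‖F'‖ < 1, ‖C‖ < 1, and that neither A' nor B' is a nonpositive real number. Define f : ℂ → ℂ by f(w) = −Li₂((m_β·w)/w_j) − Li₂((m_α·w_k)/w_j) + Li₂((m_β·w_l)/w_k) + Li₂((m_α·w_l)/w) − Li₂((w_j·w_l)/(w·w_k)) + π²/6 − log((m_β·w)/w_j)·log((m_α·w_k)/w_j). Then f has derivative D at w_m, where D = (1/w_m)·(log(1−A') + log(1−F') − log(1−C) − log B'), and moreover exp(w_m·D) = ((m_β·w_m − w_j)·((1/m_α)·w_m − w_l))/(w_j·w_l − w_k·w_m). -/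

import Mathlib

/-!
Write the potential as a sum of terms `Li₂(g(w))` and `log(g(w))·log B'` with
`g(w) ∈ {c·w, c/w}`. Each such `g` satisfies Euler's relation `w·g'(w) = ±g(w)`, and
`z·Li₂'(z) = -log(1 - z)`; hence `w_m` times the derivative of every term is a single
logarithm, and these add up to `w_m·D`. Exponentiating turns the sum of logarithms into
the rational function `(1 - A')(1 - F') / ((1 - C)·B')`.
-/

/-- The dilogarithm, defined by the power series `Li₂(z) = ∑_{n ≥ 1} zⁿ / n²`. -/
noncomputable def Li2 (z : ℂ) : ℂ := ∑' n : ℕ, z ^ (n + 1) / ((n : ℂ) + 1) ^ 2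

open Complex

lemma hasDerivAt_Li2 {z : ℂ} (hz : ‖z‖ < 1) :
    HasDerivAt Li2 (∑' n : ℕ, z ^ n / ((n : ℂ) + 1)) z := by
  obtain ⟨r, hzr, hr1⟩ : ∃ r : ℝ, ‖z‖ < r ∧ r < 1 := exists_between hz
  have hr0 : 0 < r := (norm_nonneg z).trans_lt hzr
  unfold Li2
  refine hasDerivAt_tsum_of_isPreconnected (u := fun n : ℕ => r ^ n)
    (g' := fun (n : ℕ) (y : ℂ) => y ^ n / ((n : ℂ) + 1))
    (summable_geometric_of_lt_one hr0.le hr1) Metric.isOpen_ball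
    (convex_ball (0 : ℂ) r).isPreconnected ?_ ?_ (Metric.mem_ball_self hr0) ?_
    (mem_ball_zero_iff.2 hzr)
  · intro n y _
    refine ((hasDerivAt_pow (n + 1) y).div_const (((n : ℂ) + 1) ^ 2)).congr_deriv ?_
    rw [Nat.add_sub_cancel]
    push_cast
    field_simp
  · intro n y hy
    have hy : ‖y‖ ≤ r := (mem_ball_zero_iff.1 hy).le
    have hn : (1 : ℝ) ≤ ‖(n : ℂ) + 1‖ := by norm_cast; simp
    rw [norm_div, norm_pow]
    exact (div_le_self (by positivity) hn).trans (pow_le_pow_left₀ (norm_nonneg y) hy n)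
  · simp

lemma mul_tsum_pow_div_succ {z : ℂ} (hz : ‖z‖ < 1) :
    z * ∑' n : ℕ, z ^ n / ((n : ℂ) + 1) = -log (1 - z) := by
  rw [← tsum_mul_left, ← (hasSum_taylorSeries_neg_log' hz).tsum_eq]
  congr 1 with n
  ring

/-- If `g' = c·g(x)`, the chain rule for `Li₂ ∘ g` needs no division by `g(x)`. -/
lemma HasDerivAt.Li2_of_eq_mul {g : ℂ → ℂ} {x c : ℂ} (hg : HasDerivAt g (c * g x) x)
    (h1 : ‖g x‖ < 1) : HasDerivAt (fun y => Li2 (g y)) (-c * Complex.log (1 - g x)) x := by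
  refine ((hasDerivAt_Li2 h1).comp x hg).congr_deriv ?_
  linear_combination c * mul_tsum_pow_div_succ h1

lemma HasDerivAt.clog_of_eq_mul {g : ℂ → ℂ} {x c : ℂ} (hg : HasDerivAt g (c * g x) x)
    (hx : g x ∈ slitPlane) : HasDerivAt (fun y => Complex.log (g y)) c x := by
  convert hg.clog hx using 1
  field_simp [slitPlane_ne_zero hx]

lemma hasDerivAt_const_mul_div_const (a b : ℂ) {w : ℂ} (hw : w ≠ 0) :
    HasDerivAt (fun x => a * x / b) (1 / w * (a * w / b)) w := by
  refine (((hasDerivAt_id w).const_mul a).div_const b).congr_deriv ?_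
  field_simp

lemma hasDerivAt_const_div (a : ℂ) {w : ℂ} (hw : w ≠ 0) :
    HasDerivAt (fun x => a / x) (-(1 / w) * (a / w)) w := by
  refine ((hasDerivAt_const w a).div (hasDerivAt_id w) hw).congr_deriv ?_
  simp only [id, zero_mul, zero_sub]
  field_simp

lemma hasDerivAt_const_div_mul_const (a b : ℂ) {w : ℂ} (hw : w ≠ 0) :
    HasDerivAt (fun x => a / (x * b)) (-(1 / w) * (a / (w * b))) w := by
  convert hasDerivAt_const_div (a / b) hw using 2 with x
  · rw [mul_comm, div_div]
  · rw [mul_comm w, div_div]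

lemma mem_slitPlane_of_forall_ne_ofReal {z : ℂ} (h : ∀ r : ℝ, r ≤ 0 → (r : ℂ) ≠ z) :
    z ∈ slitPlane := by
  refine mem_slitPlane_iff_not_le_zero.2 fun hz => ?_
  obtain ⟨hre, him⟩ := nonpos_iff.1 hz
  exact h z.re hre (ext rfl (by simp [him]))

lemma exp_log_add_log_sub_log_sub_log {a b c d : ℂ} (ha : a ≠ 0) (hb : b ≠ 0) (hc : c ≠ 0)
    (hd : d ≠ 0) : exp (log a + log b - log c - log d) = a * b / (c * d) := by
  rw [exp_sub, exp_sub, exp_add, exp_log ha, exp_log hb, exp_log hc, exp_log hd, div_div]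

lemma one_sub_ne_zero_of_norm_lt_one {R : Type*} [SeminormedRing R] [NormOneClass R] {z : R}
    (hz : ‖z‖ < 1) : 1 - z ≠ 0 := by
  rw [sub_ne_zero]
  rintro rfl
  simp at hz

theorem crossing_potential_deriv_wm_neg_general
    (wj wk wl wm mα mβ : ℂ)
    (hwj : wj ≠ 0) (hwk : wk ≠ 0) (hwm : wm ≠ 0)
    (hmα : mα ≠ 0)
    (A' B' F' C D : ℂ)
    (hA : A' = (mβ * wm) / wj) (hB : B' = (mα * wk) / wj)
    (hF : F' = (mα * wl) / wm) (hC : C = (wj * wl) / (wm * wk))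
    (hAnorm : ‖A'‖ < 1) (hFnorm : ‖F'‖ < 1) (hCnorm : ‖C‖ < 1)
    (hAreal : ∀ r : ℝ, r ≤ 0 → (r : ℂ) ≠ A')
    (hD : D = (1 / wm) * (Complex.log (1 - A') + Complex.log (1 - F') - Complex.log (1 - C)
      - Complex.log B')) :
    HasDerivAt (fun w : ℂ =>
      -Li2 ((mβ * w) / wj) - Li2 ((mα * wk) / wj) + Li2 ((mβ * wl) / wk) + Li2 ((mα * wl) / w)
        - Li2 ((wj * wl) / (w * wk)) + (Real.pi : ℂ) ^ 2 / 6
        - Complex.log ((mβ * w) / wj) * Complex.log ((mα * wk) / wj)) D wm ∧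
    Complex.exp (wm * D) =
      ((mβ * wm - wj) * ((1 / mα) * wm - wl)) / (wj * wl - wk * wm) := by
  have hA_mul := hasDerivAt_const_mul_div_const mβ wj hwm
  have hF_mul := hasDerivAt_const_div (mα * wl) hwm
  have hC_mul := hasDerivAt_const_div_mul_const (wj * wl) wk hwm
  subst hA hB hF hC hD
  constructor
  · have hLog := (hA_mul.clog_of_eq_mul (mem_slitPlane_of_forall_ne_ofReal hAreal)).mul_const
      (log (mα * wk / wj))
    refine (((((((hA_mul.Li2_of_eq_mul hAnorm).neg.sub_const _).add_const _).add
      (hF_mul.Li2_of_eq_mul hFnorm)).sub (hC_mul.Li2_of_eq_mul hCnorm)).add_const _).sub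
      hLog).congr_deriv ?_
    ring
  · have hA1 := one_sub_ne_zero_of_norm_lt_one hAnorm
    have hF1 := one_sub_ne_zero_of_norm_lt_one hFnorm
    have hC1 := one_sub_ne_zero_of_norm_lt_one hCnorm
    have hB0 : mα * wk / wj ≠ 0 := div_ne_zero (mul_ne_zero hmα hwk) hwj
    have hden : wj * wl - wk * wm ≠ 0 := by
      contrapose! hC1
      field_simp
      linear_combination -hC1
    rw [← mul_assoc, mul_one_div_cancel hwm, one_mul,
      exp_log_add_log_sub_log_sub_log hA1 hF1 hC1 hB0, div_eq_div_iff (mul_ne_zero hC1 hB0) hden]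
    field_simp
    ring

/-- The crossing potential of a negative crossing, viewed as a function of the
region variable `w_m`, has derivative `D` at `w_m`, and `exp (w_m * D) = τ_{c,m}`. -/
theorem crossing_potential_deriv_wm_neg
    (wj wk wl wm mα mβ : ℂ)
    (hwj : wj ≠ 0) (hwk : wk ≠ 0) (hwl : wl ≠ 0) (hwm : wm ≠ 0)
    (hmα : mα ≠ 0) (hmβ : mβ ≠ 0)
    (A' B' F' C D : ℂ)
    (hA : A' = (mβ * wm) / wj) (hB : B' = (mα * wk) / wj)
    (hF : F' = (mα * wl) / wm) (hC : C = (wj * wl) / (wm * wk))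
    (hAnorm : ‖A'‖ < 1) (hFnorm : ‖F'‖ < 1) (hCnorm : ‖C‖ < 1)
    (hAreal : ∀ r : ℝ, r ≤ 0 → (r : ℂ) ≠ A')
    (hBreal : ∀ r : ℝ, r ≤ 0 → (r : ℂ) ≠ B')
    (hD : D = (1 / wm) * (Complex.log (1 - A') + Complex.log (1 - F') - Complex.log (1 - C)
      - Complex.log B')) :
    HasDerivAt (fun w : ℂ =>
      -Li2 ((mβ * w) / wj) - Li2 ((mα * wk) / wj) + Li2 ((mβ * wl) / wk) + Li2 ((mα * wl) / w)
        - Li2 ((wj * wl) / (w * wk)) + (Real.pi : ℂ) ^ 2 / 6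
        - Complex.log ((mβ * w) / wj) * Complex.log ((mα * wk) / wj)) D wm ∧
    Complex.exp (wm * D) =
      ((mβ * wm - wj) * ((1 / mα) * wm - wl)) / (wj * wl - wk * wm) :=
  crossing_potential_deriv_wm_neg_general wj wk wl wm mα mβ hwj hwk hwm hmα A' B' F' C D hA hB hF hC
    hAnorm hFnorm hCnorm hAreal hD
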